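/- arXiv:1910.10879 — 8 statements merged into one kernel-verified Lean document; each statement's English description precedes it below -/
import Mathlib

section
/- Let r > 0, a > 0, and let {u_k} be a sequence of nonnegative reals satisfying u_{k+1} ≤ u_k − a·u_k^{1+r} for each k ∈ ℕ. Then u_{k+1} ≤ u_1 · (1 + r·a·u_1^r·k)^{−1/r} for each k ∈ ℕ. -/
open Real

/-- Bernoulli-type inequality: for `0 ≤ s < 1` and `0 < r`, `1 + r*s ≤ (1-s)^(-r)`. -/
lemma bern_aux {s r : ℝ} (hr : 0 < r) (hs0 : 0 ≤ s) (hs1 : s < 1) :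
    1 + r * s ≤ (1 - s) ^ (-r) := by
  have h1s : 0 < 1 - s := by linarith
  rcases le_or_gt r 1 with hr1 | hr1
  · -- r ≤ 1 : (1-s)^r ≤ 1 - r s, then invert
    have h1 : (1 - s) ^ r ≤ 1 - r * s := by
      have := rpow_one_add_le_one_add_mul_self (s := -s) (by linarith) hr.le hr1
      simpa [mul_neg, sub_eq_add_neg] using this
    have hrs1 : r * s < 1 := lt_of_le_of_lt (by nlinarith) hs1
    have hpos : 0 < (1 - s) ^ r := Real.rpow_pos_of_pos h1s r
    rw [Real.rpow_neg h1s.le, ← one_div, le_div_iff₀ hpos]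
    nlinarith [mul_le_mul_of_nonneg_left h1 (show (0:ℝ) ≤ 1 + r * s by positivity),
      sq_nonneg (r * s)]
  · -- r > 1 : (1 + r s)^(1/r) ≤ 1 + s ≤ (1-s)⁻¹
    have h1 : (1 + r * s) ^ (1 / r) ≤ 1 + s := by
      have := rpow_one_add_le_one_add_mul_self (s := r * s) (p := 1 / r)
        (by nlinarith) (by positivity) (by
          rw [div_le_one hr]; linarith)
      calc (1 + r * s) ^ (1 / r) ≤ 1 + (1 / r) * (r * s) := this
        _ = 1 + s := by field_simp
    have h2 : (1 : ℝ) + s ≤ (1 - s) ^ (-(1 : ℝ)) := by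
      rw [Real.rpow_neg_one, ← one_div, le_div_iff₀ h1s]
      nlinarith
    have h3 : (1 + r * s) ^ (1 / r) ≤ (1 - s) ^ (-(1 : ℝ)) := h1.trans h2
    have h4 := Real.rpow_le_rpow (by positivity) h3 hr.le
    rwa [← Real.rpow_mul (by positivity : (0:ℝ) ≤ 1 + r * s),
      ← Real.rpow_mul h1s.le, one_div, inv_mul_cancel₀ hr.ne',
      Real.rpow_one, neg_one_mul] at h4
  
/-- one step: if `0 < y ≤ x - a x^{1+r}` then `x^{-r} + r a ≤ y^{-r}`. -/
lemma step_aux {r a x y : ℝ} (hr : 0 < r) (ha : 0 < a) (hx : 0 ≤ x) (hy : 0 < y)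
    (h : y ≤ x - a * x ^ (1 + r)) : x ^ (-r) + r * a ≤ y ^ (-r) := by
  have hx0 : 0 < x := by
    rcases hx.lt_or_eq with h' | h'
    · exact h'
    · exfalso
      rw [← h', Real.zero_rpow (by positivity), mul_zero, sub_zero] at h
      linarith
  set s := a * x ^ r with hs
  have hs0 : 0 < s := by positivity
  have hxs : x - a * x ^ (1 + r) = x * (1 - s) := by
    rw [Real.rpow_add hx0, Real.rpow_one, hs]; ring
  rw [hxs] at h
  have hs1 : s < 1 := by
    by_contra hcon
    push_neg at hcon
    nlinarith
  have h1s : 0 < 1 - s := by linarith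
  have hmono : (x * (1 - s)) ^ (-r) ≤ y ^ (-r) :=
    Real.rpow_le_rpow_of_nonpos hy h (by linarith)
  have hmul : (x * (1 - s)) ^ (-r) = x ^ (-r) * (1 - s) ^ (-r) :=
    Real.mul_rpow hx0.le h1s.le
  have hb : 1 + r * s ≤ (1 - s) ^ (-r) := bern_aux hr hs0.le hs1
  have hxr : x ^ (-r) * x ^ r = 1 := by
    rw [← Real.rpow_add hx0, neg_add_cancel, Real.rpow_zero]
  have hxpos : 0 < x ^ (-r) := Real.rpow_pos_of_pos hx0 _
  calc x ^ (-r) + r * a = x ^ (-r) * (1 + r * s) := by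
        have : x ^ (-r) * (1 + r * s) = x ^ (-r) + r * a * (x ^ (-r) * x ^ r) := by
          rw [hs]; ring
        rw [this, hxr, mul_one]
    _ ≤ x ^ (-r) * (1 - s) ^ (-r) := by nlinarith
    _ = (x * (1 - s)) ^ (-r) := hmul.symm
    _ ≤ y ^ (-r) := hmono

theorem stmt1 (r a : ℝ) (hr : 0 < r) (ha : 0 < a) (u : ℕ → ℝ)
    (hu : ∀ k, 0 ≤ u k)
    (hrec : ∀ k : ℕ, 1 ≤ k → u (k + 1) ≤ u k - a * u k ^ (1 + r)) :
    ∀ k : ℕ, 1 ≤ k → u (k + 1) ≤ u 1 * (1 + r * a * u 1 ^ r * (k : ℝ)) ^ (-(1 / r)) := by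
  have key : ∀ k : ℕ, 1 ≤ k → u (k + 1) = 0 ∨
      (0 < u (k + 1) ∧ u (k + 1) ≤ u 1 ∧
        u 1 ^ (-r) + r * a * (k : ℝ) ≤ u (k + 1) ^ (-r)) := by
    intro k hk
    induction k, hk using Nat.le_induction with
    | base =>
      rcases (hu 2).lt_or_eq with h2 | h2
      · refine Or.inr ⟨h2, ?_, ?_⟩
        · have := hrec 1 le_rfl
          have : u 2 ≤ u 1 - a * u 1 ^ (1 + r) := this
          nlinarith [Real.rpow_nonneg (hu 1) (1 + r)]
        · have := step_aux hr ha (hu 1) h2 (hrec 1 le_rfl)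
          push_cast
          linarith
      · exact Or.inl h2.symm
    | succ k hk ih =>
      rcases ih with h0 | ⟨hpos, hle, hbound⟩
      · left
        have := hrec (k + 1) (by omega)
        rw [h0, Real.zero_rpow (by positivity), mul_zero, sub_zero] at this
        exact le_antisymm this (hu _)
      · rcases (hu (k + 2)).lt_or_eq with h2 | h2
        · refine Or.inr ⟨h2, ?_, ?_⟩
          · have h := hrec (k + 1) (by omega)
            nlinarith [Real.rpow_nonneg (hu (k + 1)) (1 + r)]
          · have h := step_aux hr ha (hu (k + 1)) h2 (hrec (k + 1) (by omega))
            push_cast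
            linarith [hbound, h]
        · exact Or.inl h2.symm
  intro k hk
  rcases key k hk with h0 | ⟨hpos, hle, hbound⟩
  · rw [h0]
    have h1 : (0:ℝ) ≤ 1 + r * a * u 1 ^ r * (k : ℝ) := by
      have := Real.rpow_nonneg (hu 1) r
      have : (0:ℝ) ≤ r * a * u 1 ^ r * (k : ℝ) := by positivity
      linarith
    exact mul_nonneg (hu 1) (Real.rpow_nonneg h1 _)
  · have hu1 : 0 < u 1 := lt_of_lt_of_le hpos hle
    set A : ℝ := 1 + r * a * u 1 ^ r * (k : ℝ) with hA
    have hApos : 0 < A := by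
      have : (0:ℝ) ≤ r * a * u 1 ^ r * (k : ℝ) := by positivity
      rw [hA]; linarith
    have hu1r : u 1 ^ (-r) * u 1 ^ r = 1 := by
      rw [← Real.rpow_add hu1, neg_add_cancel, Real.rpow_zero]
    have hmain : u 1 ^ (-r) * A ≤ u (k + 1) ^ (-r) := by
      have : u 1 ^ (-r) * A = u 1 ^ (-r) + r * a * (k : ℝ) * (u 1 ^ (-r) * u 1 ^ r) := by
        rw [hA]; ring
      rw [hu1r, mul_one] at this
      rw [this]; exact hbound
    have hlhs : 0 < u 1 ^ (-r) * A := by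
      have := Real.rpow_pos_of_pos hu1 (-r); positivity
    have h := Real.rpow_le_rpow_of_nonpos (z := -(1/r)) hlhs hmain
      (neg_nonpos.mpr (by positivity))
    have heq1 : (u (k + 1) ^ (-r)) ^ (-(1 / r)) = u (k + 1) := by
      rw [← Real.rpow_mul (hu (k + 1))]
      have : -r * -(1 / r) = 1 := by field_simp
      rw [this, Real.rpow_one]
    have heq2 : (u 1 ^ (-r) * A) ^ (-(1 / r)) = u 1 * A ^ (-(1 / r)) := by
      rw [Real.mul_rpow (Real.rpow_pos_of_pos hu1 (-r)).le hApos.le,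
        ← Real.rpow_mul hu1.le]
      have : -r * -(1 / r) = 1 := by field_simp
      rw [this, Real.rpow_one]
    rw [heq1, heq2] at h
    exact h
end

section
/- Let r > 0, a > 0, and 0 < b < a^{−1/r}·(1+r)^{−(1+r)/r}. Let {u_k} be a sequence of nonnegative reals satisfying u_{k+1} ≤ u_k − a·u_k^{1+r} + b for each k ∈ ℕ. Then there exists τ ∈ (0,1) such that u_{k+1} ≤ u_1·τ^k + (b/a)^{1/(1+r)} for each k ∈ ℕ. -/
/-! With `c := (b / a) ^ (1 / (1 + r))` the noise is balanced exactly, `a * c ^ (1 + r) = b`.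
Since `x ↦ x ^ (1 + r)` lies above its tangent at `c`, the recursion gives
`u (k + 1) - c ≤ τ * (u k - c)` with `τ = 1 - a * (1 + r) * c ^ r`, and the bound on `b` is
precisely what makes `τ` positive. Iterating the contraction gives the claim. -/

theorem rpow_tangent_le {p c x : ℝ} (hp : 1 ≤ p) (hc : 0 < c) (hx : 0 ≤ x) :
    c ^ p + p * c ^ (p - 1) * (x - c) ≤ x ^ p := by
  have hbern := one_add_mul_self_le_rpow_one_add (s := (x - c) / c)
    (by rw [le_div_iff₀ hc]; linarith) hp
  rw [show 1 + (x - c) / c = x / c by field_simp; ring, Real.div_rpow hx hc.le,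
    le_div_iff₀ (by positivity)] at hbern
  calc c ^ p + p * c ^ (p - 1) * (x - c) = (1 + p * ((x - c) / c)) * c ^ p := by
        rw [Real.rpow_sub_one hc.ne']; field_simp
    _ ≤ x ^ p := hbern

theorem sub_le_mul_sub_of_le_sub_rpow_add {a b r c u v : ℝ} (ha : 0 ≤ a) (hr : 0 ≤ r)
    (hc : 0 < c) (hu : 0 ≤ u) (hac : a * c ^ (1 + r) = b)
    (hv : v ≤ u - a * u ^ (1 + r) + b) :
    v - c ≤ (1 - a * (1 + r) * c ^ r) * (u - c) := by
  have htangent := rpow_tangent_le (p := 1 + r) (by linarith) hc hu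
  rw [add_sub_cancel_left] at htangent
  have := mul_le_mul_of_nonneg_left htangent ha
  linarith

theorem mul_one_add_mul_rpow_lt_one {a b r : ℝ} (hr : 0 < r) (ha : 0 < a) (hb : 0 ≤ b)
    (hb2 : b < a ^ (-(1 / r)) * (1 + r) ^ (-((1 + r) / r))) :
    a * (1 + r) * ((b / a) ^ (1 / (1 + r))) ^ r < 1 := by
  have h1r : 0 < 1 + r := by linarith
  set A := a * (1 + r)
  have hA : 0 < A := by positivity
  have hba : b / a < A ^ (-((1 + r) / r)) := by
    rw [Real.mul_rpow ha.le h1r.le, div_lt_iff₀ ha, mul_right_comm, ← Real.rpow_add_one ha.ne',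
      show -((1 + r) / r) + 1 = -(1 / r) by field_simp; ring]
    exact hb2
  calc A * ((b / a) ^ (1 / (1 + r))) ^ r = A * (b / a) ^ (r / (1 + r)) := by
        rw [← Real.rpow_mul (by positivity)]; ring_nf
    _ < A * (A ^ (-((1 + r) / r))) ^ (r / (1 + r)) := by
        gcongr
    _ = 1 := by
        rw [← Real.rpow_mul hA.le, show -((1 + r) / r) * (r / (1 + r)) = -1 by field_simp,
          Real.rpow_neg_one, mul_inv_cancel₀ hA.ne']

theorem stmt2 (r a b : ℝ) (hr : 0 < r) (ha : 0 < a) (hb : 0 < b)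
    (hb2 : b < a ^ (-(1 / r)) * (1 + r) ^ (-((1 + r) / r)))
    (u : ℕ → ℝ) (hu : ∀ k, 0 ≤ u k)
    (hrec : ∀ k : ℕ, 1 ≤ k → u (k + 1) ≤ u k - a * u k ^ (1 + r) + b) :
    ∃ τ : ℝ, τ ∈ Set.Ioo (0 : ℝ) 1 ∧
      ∀ k : ℕ, 1 ≤ k → u (k + 1) ≤ u 1 * τ ^ k + (b / a) ^ (1 / (1 + r)) := by
  set c := (b / a) ^ (1 / (1 + r))
  have hc : 0 < c := by positivity
  have hac : a * c ^ (1 + r) = b := by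
    rw [← Real.rpow_mul (by positivity), one_div_mul_cancel (by positivity), Real.rpow_one]
    field_simp
  set τ := 1 - a * (1 + r) * c ^ r
  have hτ : τ ∈ Set.Ioo (0 : ℝ) 1 :=
    ⟨by linarith [mul_one_add_mul_rpow_lt_one hr ha hb.le hb2],
      by linarith [show 0 < a * (1 + r) * c ^ r by positivity]⟩
  refine ⟨τ, hτ, fun k _ => ?_⟩
  have hgeom := le_geom (u := fun n => u (n + 1) - c) hτ.1.le k fun n _ =>
    sub_le_mul_sub_of_le_sub_rpow_add ha.le hr.le hc (hu _) hac (hrec (n + 1) (by omega))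
  have hdrop : τ ^ k * (u 1 - c) ≤ τ ^ k * u 1 :=
    mul_le_mul_of_nonneg_left (by linarith) (pow_nonneg hτ.1.le k)
  linarith
end

section
/- Let a > 0, s ∈ (0,1), b > 0 and t > s, and let {u_k} be a sequence of nonnegative reals satisfying u_{k+1} ≤ (1 − a·k^{−s})·u_k + b·k^{−t} for each k ∈ ℕ. Then u_{k+1} ≤ (b/a)·k^{s−t} + o(k^{s−t}), i.e., limsup_k u_{k+1}·k^{t−s} ≤ b/a. -/
/-!
Fix `c > b / a` and write `α k = 1 - a k^(-s)`. Since `k^(s-t) - (k+1)^(s-t) ≈ (t-s) k^(s-t-1)` is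
`o(k^(-t))` when `s < 1`, the sequence `c k^(s-t)` is eventually a supersolution of
`v (k+1) ≥ α k v k + b k^(-t)`; for the same reason `M k^(s-t-1)` is eventually a supersolution
of the homogeneous recursion. Taking `M` so large that their sum dominates `u` at the starting
index, the discrete comparison principle gives `u k ≤ c k^(s-t) + M k^(s-t-1)` from then on, so
`u k · k^(t-s) ≤ c + M / k`.
-/

open Filter Real Topology Set

theorem one_add_mul_self_le_rpow_one_add_of_nonpos {x : ℝ} (hx : -1 < x) {p : ℝ} (hp : p ≤ 0) :
    1 + p * x ≤ (1 + x) ^ p := by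
  have hx1 : 0 < 1 + x := by linarith
  have hlog : log (1 + x) ≤ x := by linarith [log_le_sub_one_of_pos hx1]
  rw [rpow_def_of_pos hx1]
  nlinarith [add_one_le_exp (log (1 + x) * p)]

theorem le_of_forall_le_mul_add_of_forall_mul_add_le {R : Type*} [Semiring R] [PartialOrder R]
    [IsOrderedRing R] {u v α β : ℕ → R} {K : ℕ} (hα : ∀ k ≥ K, 0 ≤ α k)
    (hu : ∀ k ≥ K, u (k + 1) ≤ α k * u k + β k) (hv : ∀ k ≥ K, α k * v k + β k ≤ v (k + 1))
    (hK : u K ≤ v K) : ∀ k ≥ K, u k ≤ v k := by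
  intro k hk
  induction k, hk using Nat.le_induction with
  | base => exact hK
  | succ k hk ih =>
    calc u (k + 1) ≤ α k * u k + β k := hu k hk
      _ ≤ α k * v k + β k := by gcongr; exact hα k hk
      _ ≤ v (k + 1) := hv k hk

theorem eventually_mul_rpow_neg_le_one {a s : ℝ} (hs : 0 < s) :
    ∀ᶠ k : ℕ in atTop, a * (k : ℝ) ^ (-s) ≤ 1 := by
  have h : Tendsto (fun k : ℕ => a * (k : ℝ) ^ (-s)) atTop (𝓝 0) := by
    simpa using ((tendsto_rpow_neg_atTop hs).comp tendsto_natCast_atTop_atTop).const_mul a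
  exact (h.eventually_lt_const one_pos).mono fun _ hk => hk.le

theorem eventually_rpow_supersolution {a e s t : ℝ} (hs : s < 1) (hst : s ≤ t) (hea : e < a) :
    ∀ᶠ k : ℕ in atTop,
      (1 - a * (k : ℝ) ^ (-s)) * (k : ℝ) ^ (s - t) + e * (k : ℝ) ^ (-t) ≤ ((k : ℝ) + 1) ^ (s - t) := by
  have hgrowth : Tendsto (fun k : ℕ => (a - e) * (k : ℝ) ^ (1 - s)) atTop atTop :=
    ((tendsto_rpow_atTop (by linarith)).comp tendsto_natCast_atTop_atTop).const_mul_atTop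
      (by linarith)
  filter_upwards [hgrowth.eventually_ge_atTop (t - s), eventually_ge_atTop 1] with k hk hk1
  set x : ℝ := (k : ℝ)
  have hx : 0 < x := by simp only [x]; exact_mod_cast hk1
  have hsplit : (x + 1) ^ (s - t) = x ^ (s - t) * (1 + x⁻¹) ^ (s - t) := by
    rw [← mul_rpow hx.le (by positivity), mul_add, mul_one, mul_inv_cancel₀ hx.ne']
  have hbern := one_add_mul_self_le_rpow_one_add_of_nonpos
    (show -1 < x⁻¹ by linarith [inv_pos.2 hx]) (show s - t ≤ 0 by linarith)
  have hneg : x ^ (-s) * x ^ (s - t) = x ^ (-t) := by rw [← rpow_add hx]; ring_nf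
  have hone : x ^ (1 - s) * x ^ (s - t) = x * x ^ (-t) := by
    rw [← rpow_add hx, show 1 - s + (s - t) = 1 + -t by ring, rpow_add hx, rpow_one]
  have hdrift : (t - s) * x ^ (s - t) ≤ (a - e) * x * x ^ (-t) := by
    calc (t - s) * x ^ (s - t) ≤ (a - e) * x ^ (1 - s) * x ^ (s - t) := by gcongr
      _ = (a - e) * x * x ^ (-t) := by rw [mul_assoc, hone, mul_assoc]
  have hdrift' : (t - s) * x ^ (s - t) * x⁻¹ ≤ (a - e) * x ^ (-t) := by
    rw [← div_eq_mul_inv, div_le_iff₀ hx]; linarith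
  calc (1 - a * x ^ (-s)) * x ^ (s - t) + e * x ^ (-t)
      = x ^ (s - t) - (a - e) * x ^ (-t) := by rw [← hneg]; ring
    _ ≤ x ^ (s - t) * (1 + (s - t) * x⁻¹) := by linarith
    _ ≤ (x + 1) ^ (s - t) := by rw [hsplit]; gcongr

theorem eventually_mul_rpow_le_of_div_lt {a s b t c : ℝ} {u : ℕ → ℝ} (ha : 0 < a)
    (hs : s ∈ Ioo 0 1) (hb : 0 < b) (hts : s < t) (hu : ∀ k, 0 ≤ u k)
    (hrec : ∀ k : ℕ, 1 ≤ k →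
      u (k + 1) ≤ (1 - a * (k : ℝ) ^ (-s)) * u k + b * (k : ℝ) ^ (-t))
    (hc : b / a < c) :
    ∀ᶠ k : ℕ in atTop, u k * (k : ℝ) ^ (t - s) ≤ c := by
  obtain ⟨c', hbc', hc'c⟩ := exists_between hc
  have hc' : 0 < c' := (div_pos hb ha).trans hbc'
  have hea : b / c' < a := by
    rw [div_lt_iff₀ hc']; rwa [div_lt_iff₀ ha, mul_comm] at hbc'
  obtain ⟨K, hK⟩ := eventually_atTop.1 <| (eventually_ge_atTop 1).and <|
    (eventually_mul_rpow_neg_le_one (a := a) hs.1).and <|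
    (eventually_rpow_supersolution hs.2 hts.le hea).and
    (eventually_rpow_supersolution (t := t + 1) hs.2 (by linarith) ha)
  have hpos : ∀ k ≥ K, (0 : ℝ) < k := fun k hk => by exact_mod_cast (hK k hk).1
  set M := u K * (K : ℝ) ^ (t + 1 - s)
  have hM : 0 ≤ M := mul_nonneg (hu K) (rpow_nonneg (Nat.cast_nonneg K) _)
  set v : ℕ → ℝ := fun k => c' * (k : ℝ) ^ (s - t) + M * (k : ℝ) ^ (s - (t + 1))
  have hv : ∀ k ≥ K, u k ≤ v k := by
    refine le_of_forall_le_mul_add_of_forall_mul_add_le (α := fun k => 1 - a * (k : ℝ) ^ (-s))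
      (β := fun k => b * (k : ℝ) ^ (-t)) (fun k hk => by linarith [(hK k hk).2.1])
      (fun k hk => hrec k (hK k hk).1) (fun k hk => ?_) ?_
    · obtain ⟨-, -, h1, h2⟩ := hK k hk
      simp only [v, Nat.cast_add, Nat.cast_one]
      have hb' : c' * (b / c') = b := mul_div_cancel₀ b hc'.ne'
      linear_combination c' * h1 + M * h2 - (k : ℝ) ^ (-t) * hb'
    · have hMK : M * (K : ℝ) ^ (s - (t + 1)) = u K := by
        rw [mul_assoc, ← rpow_add (hpos K le_rfl), show t + 1 - s + (s - (t + 1)) = 0 by ring,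
          rpow_zero, mul_one]
      simp only [v, hMK]
      exact le_add_of_nonneg_left (by positivity)
  have hlim : Tendsto (fun k : ℕ => c' + M / k) atTop (𝓝 c') := by
    simpa using tendsto_const_nhds.add (tendsto_const_div_atTop_nhds_zero_nat M)
  filter_upwards [eventually_ge_atTop K, hlim.eventually_le_const hc'c] with k hk hkc
  calc u k * (k : ℝ) ^ (t - s) ≤ v k * (k : ℝ) ^ (t - s) := by gcongr; exact hv k hk
    _ = c' + M / k := by
      rw [add_mul, mul_assoc, mul_assoc, ← rpow_add (hpos k hk), ← rpow_add (hpos k hk),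
        show s - t + (t - s) = 0 by ring, show s - (t + 1) + (t - s) = -1 by ring, rpow_zero,
        rpow_neg_one, mul_one, div_eq_mul_inv]
    _ ≤ c := hkc

theorem stmt5 (a s b t : ℝ) (ha : 0 < a) (hs : s ∈ Set.Ioo (0 : ℝ) 1) (hb : 0 < b)
    (hts : s < t) (u : ℕ → ℝ) (hu : ∀ k, 0 ≤ u k)
    (hrec : ∀ k : ℕ, 1 ≤ k →
      u (k + 1) ≤ (1 - a * (k : ℝ) ^ (-s)) * u k + b * (k : ℝ) ^ (-t)) :
    Filter.limsup (fun k : ℕ => u (k + 1) * (k : ℝ) ^ (t - s)) Filter.atTop ≤ b / a := by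
  refine le_of_forall_gt_imp_ge_of_dense fun c hc => limsup_le_of_le ?_ ?_
  · exact isCoboundedUnder_le_of_le atTop fun k =>
      mul_nonneg (hu (k + 1)) (rpow_nonneg (Nat.cast_nonneg k) _)
  · filter_upwards [(tendsto_add_atTop_nat 1).eventually
      (eventually_mul_rpow_le_of_div_lt ha hs hb hts hu hrec hc)] with k hk
    calc u (k + 1) * (k : ℝ) ^ (t - s) ≤ u (k + 1) * ((k + 1 : ℕ) : ℝ) ^ (t - s) := by
          gcongr
          · exact hu _
          · exact k.le_succ
      _ ≤ c := hk
end

section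
/- Let X ⊆ ℝⁿ be nonempty closed convex, f : ℝⁿ → ℝ continuous quasi-convex satisfying the Hölder condition of order p ∈ (0,1] with modulus L > 0 relative to X* = argmin_X f (i.e., f(x) − f* ≤ L·dist(x, X*)^p for all x), and let ε > 0. If x ∈ X with f(x) > f* + ε and g ∈ ∂*_ε f(x) with ‖g‖ = 1, then ⟨g, x − x*⟩ ≥ ((f(x) − f* − ε)/L)^{1/p} for every x* ∈ X*. -/
/-! Every point `xs + t • g` with `xs ∈ X*` and `0 ≤ t < ((f x - f* - ε) / L) ^ (1 / p)` lies within
distance `t` of `X*`, so the Hölder bound puts it strictly below the level `f x - ε`. The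
quasi-subgradient inequality at such a point reads `t ≤ ⟪g, x - xs⟫`; letting `t` increase to the
threshold gives the claim. -/

open Metric

theorem le_inner_sub_of_lt_level {E : Type*} [NormedAddCommGroup E] [InnerProductSpace ℝ E]
    {f : E → ℝ} {g x xs : E} {a t : ℝ} (hg : ‖g‖ = 1)
    (hsub : ∀ y, f y < a → inner ℝ g (y - x) ≤ 0) (ht : f (xs + t • g) < a) :
    t ≤ inner ℝ g (x - xs) := by
  have hexpand : inner ℝ g (xs + t • g - x) = t - inner ℝ g (x - xs) := by
    rw [show xs + t • g - x = t • g - (x - xs) by abel, inner_sub_right, real_inner_smul_right,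
      real_inner_self_eq_norm_sq, hg]
    ring
  linarith [hsub _ ht]

theorem sub_le_mul_dist_rpow_of_mem {α : Type*} [PseudoMetricSpace α] {f : α → ℝ} {S : Set α}
    {fstar L p : ℝ} (hL : 0 ≤ L) (hp : 0 ≤ p)
    (hHolder : ∀ x, f x - fstar ≤ L * infDist x S ^ p) (y : α) {xs : α} (hxs : xs ∈ S) :
    f y - fstar ≤ L * dist y xs ^ p :=
  (hHolder y).trans <| mul_le_mul_of_nonneg_left
    (Real.rpow_le_rpow infDist_nonneg (infDist_le_dist_of_mem hxs) hp) hL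

theorem mul_rpow_lt_of_lt_div_rpow_one_div {t A L p : ℝ} (ht : 0 ≤ t) (hA : 0 ≤ A) (hL : 0 < L)
    (hp : 0 < p) (h : t < (A / L) ^ (1 / p)) : L * t ^ p < A := by
  rwa [one_div, Real.lt_rpow_inv_iff_of_pos ht (div_nonneg hA hL.le) hp, lt_div_iff₀' hL] at h

theorem stmt10_general (n : ℕ)
    (f : EuclideanSpace ℝ (Fin n) → ℝ)
    (fstar : ℝ) (Xstar : Set (EuclideanSpace ℝ (Fin n)))
    (p L : ℝ) (hp : p ∈ Set.Ioc (0 : ℝ) 1) (hL : 0 < L)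
    (hHolder : ∀ x, f x - fstar ≤ L * Metric.infDist x Xstar ^ p)
    (ε : ℝ)
    (x : EuclideanSpace ℝ (Fin n)) (hfx : fstar + ε < f x)
    (g : EuclideanSpace ℝ (Fin n)) (hg : ‖g‖ = 1)
    (hsub : ∀ y, f y < f x - ε → (inner ℝ g (y - x) : ℝ) ≤ 0) :
    ∀ xs ∈ Xstar, ((f x - fstar - ε) / L) ^ (1 / p) ≤ (inner ℝ g (x - xs) : ℝ) := by
  intro xs hxs
  have hgap : 0 < f x - fstar - ε := by linarith
  refine le_of_forall_lt_imp_le_of_dense fun z hz => ?_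
  obtain ⟨t, hzt, ht0, htr⟩ : ∃ t, z ≤ t ∧ 0 ≤ t ∧ t < ((f x - fstar - ε) / L) ^ (1 / p) :=
    ⟨max z 0, le_max_left _ _, le_max_right _ _,
      max_lt hz (Real.rpow_pos_of_pos (div_pos hgap hL) _)⟩
  have hdist : dist (xs + t • g) xs = t := by
    rw [dist_eq_norm, add_sub_cancel_left, norm_smul, hg, mul_one, Real.norm_of_nonneg ht0]
  have hlevel : f (xs + t • g) < f x - ε := by
    have hgrowth := sub_le_mul_dist_rpow_of_mem hL.le hp.1.le hHolder (xs + t • g) hxs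
    rw [hdist] at hgrowth
    linarith [mul_rpow_lt_of_lt_div_rpow_one_div ht0 hgap.le hL hp.1 htr]
  exact hzt.trans (le_inner_sub_of_lt_level hg hsub hlevel)

theorem stmt10 (n : ℕ) (X : Set (EuclideanSpace ℝ (Fin n)))
    (hXne : X.Nonempty) (hXcl : IsClosed X) (hXcv : Convex ℝ X)
    (f : EuclideanSpace ℝ (Fin n) → ℝ) (hfc : Continuous f)
    (hfq : ∀ x y : EuclideanSpace ℝ (Fin n), ∀ α : ℝ, α ∈ Set.Icc (0 : ℝ) 1 →
      f ((1 - α) • x + α • y) ≤ max (f x) (f y))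
    (fstar : ℝ) (Xstar : Set (EuclideanSpace ℝ (Fin n)))
    (hXstar : Xstar = {z ∈ X | f z = fstar})
    (hmin : ∀ y ∈ X, fstar ≤ f y) (hXsne : Xstar.Nonempty)
    (p L : ℝ) (hp : p ∈ Set.Ioc (0 : ℝ) 1) (hL : 0 < L)
    (hHolder : ∀ x, f x - fstar ≤ L * Metric.infDist x Xstar ^ p)
    (ε : ℝ) (hε : 0 < ε)
    (x : EuclideanSpace ℝ (Fin n)) (hx : x ∈ X) (hfx : fstar + ε < f x)
    (g : EuclideanSpace ℝ (Fin n)) (hg : ‖g‖ = 1)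
    (hsub : ∀ y, f y < f x - ε → (inner ℝ g (y - x) : ℝ) ≤ 0) :
    ∀ xs ∈ Xstar, ((f x - fstar - ε) / L) ^ (1 / p) ≤ (inner ℝ g (x - xs) : ℝ) :=
  stmt10_general n f fstar Xstar p L hp hL hHolder ε x hfx g hg hsub
end

section
/- Under the setting of the inexact subgradient method x_{k+1} = P_X(x_k − v_k g_k) with g_k ∈ ∂*_ε f(x_k) ∩ S and v_k > 0, if f(x_k) > f* + ε then for each x* ∈ X*: ‖x_{k+1} − x*‖² ≤ ‖x_k − x*‖² − 2v_k·((f(x_k) − f* − ε)/L)^{1/p} + v_k². -/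
/-!
By the Hölder growth condition, every point within distance `((f xk - f* - ε) / L) ^ (1 / p)`
of a minimizer `xs` lies in the strict sublevel set `{f < f xk - ε}`, where the quasi-subgradient
inequality `⟪g, y - xk⟫ ≤ 0` holds. Testing it along the ray `xs + t • g` gives
`⟪g, xk - xs⟫ ≥ ((f xk - f* - ε) / L) ^ (1 / p)`. Since projecting onto the convex set `X` does
not increase distances to `xs ∈ X`, expanding `‖xk - v • g - xs‖²` finishes the proof.
-/

open Metric
open scoped InnerProductSpace

section

variable {F : Type*} [NormedAddCommGroup F] [InnerProductSpace ℝ F]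

theorem real_inner_sub_le_zero_of_forall_norm_sub_le {K : Set F} (hK : Convex ℝ K)
    {u z : F} (hu : u ∈ K) (hmin : ∀ w ∈ K, ‖u - z‖ ≤ ‖w - z‖) :
    ∀ w ∈ K, ⟪z - u, w - u⟫_ℝ ≤ 0 := by
  have : Nonempty K := ⟨⟨u, hu⟩⟩
  refine (norm_eq_iInf_iff_real_inner_le_zero hK hu).mp (le_antisymm ?_ ?_)
  · exact le_ciInf fun w => by simpa only [norm_sub_rev z] using hmin w w.2
  · exact ciInf_le (f := fun w : K => ‖z - (w : F)‖)
      ⟨0, Set.forall_mem_range.2 fun _ => norm_nonneg _⟩ ⟨u, hu⟩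

theorem norm_sub_le_of_forall_norm_sub_le {K : Set F} (hK : Convex ℝ K)
    {u z : F} (hu : u ∈ K) (hmin : ∀ w ∈ K, ‖u - z‖ ≤ ‖w - z‖) {y : F} (hy : y ∈ K) :
    ‖u - y‖ ≤ ‖z - y‖ := by
  have hobtuse := real_inner_sub_le_zero_of_forall_norm_sub_le hK hu hmin y hy
  have hexpand : ‖z - y‖ ^ 2 = ‖z - u‖ ^ 2 - 2 * ⟪z - u, y - u⟫_ℝ + ‖u - y‖ ^ 2 := by
    rw [show z - y = (z - u) - (y - u) by abel, norm_sub_sq_real, norm_sub_rev y u]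
  exact pow_le_pow_iff_left₀ (norm_nonneg _) (norm_nonneg _) two_ne_zero |>.mp
    (by nlinarith [sq_nonneg ‖z - u‖])

theorem le_real_inner_sub_of_forall_mem_ball {g x c : F} (hg : ‖g‖ = 1) {r : ℝ} (hr : 0 < r)
    (hball : ∀ y ∈ ball c r, ⟪g, y - x⟫_ℝ ≤ 0) :
    r ≤ ⟪g, x - c⟫_ℝ := by
  have hstep : ∀ t, 0 ≤ t → t < r → t ≤ ⟪g, x - c⟫_ℝ := by
    intro t ht htr
    have hmem : c + t • g ∈ ball c r := by
      rwa [mem_ball, dist_self_add_left, norm_smul, hg, mul_one, Real.norm_of_nonneg ht]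
    have hinner : ⟪g, c + t • g - x⟫_ℝ = t - ⟪g, x - c⟫_ℝ := by
      rw [show c + t • g - x = t • g - (x - c) by abel, inner_sub_right,
        real_inner_smul_right, real_inner_self_eq_norm_sq, hg, one_pow, mul_one]
    linarith [hball _ hmem]
  refine le_of_forall_lt_imp_le_of_dense fun t htr => ?_
  rcases le_or_gt 0 t with ht | ht
  · exact hstep t ht htr
  · linarith [hstep 0 le_rfl hr]

end

theorem sub_lt_of_mem_ball_of_le_mul_infDist_rpow {α : Type*} [PseudoMetricSpace α]
    {f : α → ℝ} {S : Set α} {m p L D : ℝ} (hp : 0 < p) (hL : 0 < L) (hD : 0 < D)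
    (hgrowth : ∀ x, f x - m ≤ L * infDist x S ^ p) {c : α} (hc : c ∈ S)
    {y : α} (hy : y ∈ ball c ((D / L) ^ (1 / p))) :
    f y - m < D := by
  have hDL : 0 < D / L := div_pos hD hL
  have hdist : infDist y S < (D / L) ^ (1 / p) :=
    (infDist_le_dist_of_mem hc).trans_lt (mem_ball.mp hy)
  have hpow : infDist y S ^ p < D / L := by
    simpa only [← Real.rpow_mul hDL.le, one_div_mul_cancel hp.ne', Real.rpow_one] using
      Real.rpow_lt_rpow infDist_nonneg hdist hp
  calc f y - m ≤ L * infDist y S ^ p := hgrowth y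
    _ < L * (D / L) := mul_lt_mul_of_pos_left hpow hL
    _ = D := mul_div_cancel₀ D hL.ne'

theorem stmt11_general (n : ℕ) (X : Set (EuclideanSpace ℝ (Fin n)))
    (hXcv : Convex ℝ X)
    (f : EuclideanSpace ℝ (Fin n) → ℝ)
    (fstar : ℝ) (Xstar : Set (EuclideanSpace ℝ (Fin n)))
    (hXstar : Xstar = {z ∈ X | f z = fstar})
    (p L : ℝ) (hp : p ∈ Set.Ioc (0 : ℝ) 1) (hL : 0 < L)
    (hHolder : ∀ x, f x - fstar ≤ L * Metric.infDist x Xstar ^ p)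
    (ε : ℝ)
    (xk : EuclideanSpace ℝ (Fin n))
    (v : ℝ) (hv : 0 < v)
    (g : EuclideanSpace ℝ (Fin n)) (hg : ‖g‖ = 1)
    (hsub : ∀ y, f y < f xk - ε → (inner ℝ g (y - xk) : ℝ) ≤ 0)
    (xnext : EuclideanSpace ℝ (Fin n)) (hxnX : xnext ∈ X)
    (hproj : ∀ y ∈ X, ‖xnext - (xk - v • g)‖ ≤ ‖y - (xk - v • g)‖)
    (hfxk : fstar + ε < f xk) :
    ∀ xs ∈ Xstar,
      ‖xnext - xs‖ ^ 2 ≤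
        ‖xk - xs‖ ^ 2 - 2 * v * ((f xk - fstar - ε) / L) ^ (1 / p) + v ^ 2 := by
  intro xs hxs
  have hxsX : xs ∈ X := by rw [hXstar] at hxs; exact hxs.1
  set r := ((f xk - fstar - ε) / L) ^ (1 / p)
  have hr : 0 < r := Real.rpow_pos_of_pos (div_pos (by linarith) hL) _
  have hball : ∀ y ∈ ball xs r, f y < f xk - ε := fun y hy => by
    have := sub_lt_of_mem_ball_of_le_mul_infDist_rpow hp.1 hL (by linarith) hHolder hxs hy
    linarith
  have hinner : r ≤ ⟪g, xk - xs⟫_ℝ :=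
    le_real_inner_sub_of_forall_mem_ball hg hr fun y hy => hsub y (hball y hy)
  have hexpand : ‖xk - v • g - xs‖ ^ 2 = ‖xk - xs‖ ^ 2 - 2 * v * ⟪g, xk - xs⟫_ℝ + v ^ 2 := by
    rw [sub_right_comm, norm_sub_sq_real, real_inner_smul_right, real_inner_comm, norm_smul, hg,
      Real.norm_of_nonneg hv.le]
    ring
  calc ‖xnext - xs‖ ^ 2 ≤ ‖xk - v • g - xs‖ ^ 2 := by
        gcongr; exact norm_sub_le_of_forall_norm_sub_le hXcv hxnX hproj hxsX
    _ = ‖xk - xs‖ ^ 2 - 2 * v * ⟪g, xk - xs⟫_ℝ + v ^ 2 := hexpand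
    _ ≤ ‖xk - xs‖ ^ 2 - 2 * v * r + v ^ 2 := by gcongr

theorem stmt11 (n : ℕ) (X : Set (EuclideanSpace ℝ (Fin n)))
    (hXne : X.Nonempty) (hXcl : IsClosed X) (hXcv : Convex ℝ X)
    (f : EuclideanSpace ℝ (Fin n) → ℝ) (hfc : Continuous f)
    (hfq : ∀ x y : EuclideanSpace ℝ (Fin n), ∀ α : ℝ, α ∈ Set.Icc (0 : ℝ) 1 →
      f ((1 - α) • x + α • y) ≤ max (f x) (f y))
    (fstar : ℝ) (Xstar : Set (EuclideanSpace ℝ (Fin n)))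
    (hXstar : Xstar = {z ∈ X | f z = fstar})
    (hmin : ∀ y ∈ X, fstar ≤ f y) (hXsne : Xstar.Nonempty)
    (p L : ℝ) (hp : p ∈ Set.Ioc (0 : ℝ) 1) (hL : 0 < L)
    (hHolder : ∀ x, f x - fstar ≤ L * Metric.infDist x Xstar ^ p)
    (ε : ℝ) (hε : 0 < ε)
    (xk : EuclideanSpace ℝ (Fin n)) (hxk : xk ∈ X)
    (v : ℝ) (hv : 0 < v)
    (g : EuclideanSpace ℝ (Fin n)) (hg : ‖g‖ = 1)
    (hsub : ∀ y, f y < f xk - ε → (inner ℝ g (y - xk) : ℝ) ≤ 0)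
    (xnext : EuclideanSpace ℝ (Fin n)) (hxnX : xnext ∈ X)
    (hproj : ∀ y ∈ X, ‖xnext - (xk - v • g)‖ ≤ ‖y - (xk - v • g)‖)
    (hfxk : fstar + ε < f xk) :
    ∀ xs ∈ Xstar,
      ‖xnext - xs‖ ^ 2 ≤
        ‖xk - xs‖ ^ 2 - 2 * v * ((f xk - fstar - ε) / L) ^ (1 / p) + v ^ 2 :=
  stmt11_general n X hXcv f fstar Xstar hXstar p L hp hL hHolder ε xk v hv g hg hsub xnext hxnX
    hproj hfxk
end

section
/- Let ε ≥ 0, p ∈ (0,1], and {x_k} ⊆ X satisfy: for each minimizer x* and each k with f(x_k) > f* + ε, ‖x_{k+1} − x*‖² − ‖x_k − x*‖² ≤ −α_k·v_k·(f(x_k) − f* − ε)^{1/p} + β_k·v_k², where α_k → α > 0, β_k → β > 0, and v_k ≡ v > 0. Then liminf_k f(x_k) ≤ f* + (βv/α)^p + ε. -/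
theorem stmt12 (n : ℕ) (X Xstar : Set (EuclideanSpace ℝ (Fin n)))
    (f : EuclideanSpace ℝ (Fin n) → ℝ) (fstar : ℝ)
    (hXsne : Xstar.Nonempty) (hXsX : Xstar ⊆ X)
    (hfs : ∀ z ∈ Xstar, f z = fstar) (hmin : ∀ y ∈ X, fstar ≤ f y)
    (ε p : ℝ) (hε : 0 ≤ ε) (hp : p ∈ Set.Ioc (0 : ℝ) 1)
    (x : ℕ → EuclideanSpace ℝ (Fin n)) (hxX : ∀ k, x k ∈ X)
    (α β : ℕ → ℝ) (a b : ℝ) (ha : 0 < a) (hb : 0 < b)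
    (hαpos : ∀ k, 0 < α k) (hβpos : ∀ k, 0 < β k)
    (hαa : Filter.Tendsto α Filter.atTop (nhds a))
    (hβb : Filter.Tendsto β Filter.atTop (nhds b))
    (v : ℝ) (hv : 0 < v)
    (H1 : ∀ xs ∈ Xstar, ∀ k : ℕ, 1 ≤ k → fstar + ε < f (x k) →
      ‖x (k + 1) - xs‖ ^ 2 - ‖x k - xs‖ ^ 2 ≤
        -(α k * v * (f (x k) - fstar - ε) ^ (1 / p)) + β k * v ^ 2) :
    Filter.liminf (fun k => f (x k)) Filter.atTop ≤ fstar + (b * v / a) ^ p + ε := by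
  obtain ⟨hp0, hp1⟩ := hp
  obtain ⟨xs, hxs⟩ := hXsne
  have hbd : Filter.IsBoundedUnder (· ≥ ·) Filter.atTop (fun k => f (x k)) :=
    Filter.isBoundedUnder_of ⟨fstar, fun k => hmin _ (hxX k)⟩
  set L : ℝ := fstar + (b * v / a) ^ p + ε with hL
  have hq : (0:ℝ) < b * v / a := by positivity
  have hqp : (0:ℝ) < (b * v / a) ^ p := Real.rpow_pos_of_pos hq p
  refine le_of_forall_pos_le_add fun δ hδ => ?_
  refine Filter.liminf_le_of_frequently_le ?_ hbd
  by_contra hfreq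
  rw [Filter.not_frequently] at hfreq
  have hfreq' : ∀ᶠ k in Filter.atTop, L + δ < f (x k) := by
    filter_upwards [hfreq] with k hk
    push_neg at hk; linarith
  set M : ℝ := ((b * v / a) ^ p + δ) ^ (1 / p) with hM
  have hMgt : b * v / a < M := by
    have h1 : ((b * v / a) ^ p) ^ (1 / p) < M :=
      Real.rpow_lt_rpow (le_of_lt hqp) (by linarith) (by positivity)
    have h2 : ((b * v / a) ^ p) ^ (1 / p) = b * v / a := by
      rw [← Real.rpow_mul (le_of_lt hq), mul_one_div, div_self hp0.ne', Real.rpow_one]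
    linarith
  have hMpos : 0 < M := lt_trans hq hMgt
  set c : ℝ := a * v * M - b * v ^ 2 with hc
  have hcpos : 0 < c := by
    have h2 : b * v < a * M := by
      rw [div_lt_iff₀ ha] at hMgt; nlinarith
    have : b * v ^ 2 < a * v * M := by nlinarith
    linarith
  have hT : Filter.Tendsto (fun k => α k * v * M - β k * v ^ 2) Filter.atTop (nhds c) :=
    ((hαa.mul_const v).mul_const M).sub (hβb.mul_const (v ^ 2))
  have hTe : ∀ᶠ k in Filter.atTop, c / 2 < α k * v * M - β k * v ^ 2 :=
    hT.eventually (eventually_gt_nhds (by linarith))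
  obtain ⟨K, hK⟩ := (hfreq'.and (hTe.and (Filter.eventually_ge_atTop 1))).exists_forall_of_atTop
  have hdesc : ∀ k, K ≤ k → ‖x (k + 1) - xs‖ ^ 2 ≤ ‖x k - xs‖ ^ 2 - c / 2 := by
    intro k hk
    obtain ⟨hfk, hck, hk1⟩ := hK k hk
    have hfε : fstar + ε < f (x k) := by
      simp only [hL] at hfk; linarith
    have h1 := H1 xs hxs k hk1 hfε
    have hbase : (b * v / a) ^ p + δ ≤ f (x k) - fstar - ε := by
      simp only [hL] at hfk; linarith
    have hMle : M ≤ (f (x k) - fstar - ε) ^ (1 / p) :=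
      Real.rpow_le_rpow (by positivity) hbase (by positivity)
    have h2 : α k * v * M ≤ α k * v * (f (x k) - fstar - ε) ^ (1 / p) :=
      mul_le_mul_of_nonneg_left hMle (le_of_lt (mul_pos (hαpos k) hv))
    linarith
  have hiter : ∀ m : ℕ, ‖x (K + m) - xs‖ ^ 2 ≤ ‖x K - xs‖ ^ 2 - m * (c / 2) := by
    intro m
    induction m with
    | zero => simp
    | succ m ih =>
        have hstep := hdesc (K + m) (Nat.le_add_right _ _)
        have heq : K + (m + 1) = (K + m) + 1 := by ring
        rw [heq]
        push_cast
        push_cast at ih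
        linarith
  obtain ⟨m, hm⟩ := exists_nat_gt (‖x K - xs‖ ^ 2 / (c / 2))
  have hm' : ‖x K - xs‖ ^ 2 < m * (c / 2) := by
    rwa [div_lt_iff₀ (by linarith)] at hm
  have hfin := hiter m
  nlinarith [sq_nonneg ‖x (K + m) - xs‖]
end

section
/- Let ε ≥ 0, p ∈ (0,1], and {x_k} ⊆ X satisfy the inexact basic inequality ‖x_{k+1} − x*‖² − ‖x_k − x*‖² ≤ −α_k·v_k·(f(x_k) − f* − ε)^{1/p} + β_k·v_k² whenever f(x_k) > f* + ε, with α_k → α > 0, β_k → β > 0, and diminishing stepsizes v_k = c·k^{−s} for c > 0, s ∈ (0,1). Then liminf_k f(x_k) ≤ f* + ε. -/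
theorem stmt13 (n : ℕ) (X Xstar : Set (EuclideanSpace ℝ (Fin n)))
    (f : EuclideanSpace ℝ (Fin n) → ℝ) (fstar : ℝ)
    (hXsne : Xstar.Nonempty) (hXsX : Xstar ⊆ X)
    (hfs : ∀ z ∈ Xstar, f z = fstar) (hmin : ∀ y ∈ X, fstar ≤ f y)
    (ε p : ℝ) (hε : 0 ≤ ε) (hp : p ∈ Set.Ioc (0 : ℝ) 1)
    (x : ℕ → EuclideanSpace ℝ (Fin n)) (hxX : ∀ k, x k ∈ X)
    (α β : ℕ → ℝ) (a b : ℝ) (ha : 0 < a) (hb : 0 < b)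
    (hαpos : ∀ k, 0 < α k) (hβpos : ∀ k, 0 < β k)
    (hαa : Filter.Tendsto α Filter.atTop (nhds a))
    (hβb : Filter.Tendsto β Filter.atTop (nhds b))
    (c s : ℝ) (hc : 0 < c) (hs : s ∈ Set.Ioo (0 : ℝ) 1)
    (H1 : ∀ xs ∈ Xstar, ∀ k : ℕ, 1 ≤ k → fstar + ε < f (x k) →
      ‖x (k + 1) - xs‖ ^ 2 - ‖x k - xs‖ ^ 2 ≤
        -(α k * (c * (k : ℝ) ^ (-s)) * (f (x k) - fstar - ε) ^ (1 / p)) +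
          β k * (c * (k : ℝ) ^ (-s)) ^ 2) :
    Filter.liminf (fun k => f (x k)) Filter.atTop ≤ fstar + ε := by
  by_contra hcon
  push_neg at hcon
  obtain ⟨xs, hxs⟩ := hXsne
  have hbd : Filter.IsBoundedUnder (· ≥ ·) Filter.atTop (fun k => f (x k)) :=
    Filter.isBoundedUnder_of ⟨fstar, fun k => hmin _ (hxX k)⟩
  set L := Filter.liminf (fun k => f (x k)) Filter.atTop with hL
  set δ : ℝ := (L - (fstar + ε)) / 2 with hδdef
  have hδ : 0 < δ := by simp only [hδdef]; linarith
  have hev : ∀ᶠ k in Filter.atTop, fstar + ε + δ < f (x k) :=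
    Filter.eventually_lt_of_lt_liminf (by simp only [hδdef]; rw [← hL]; linarith) hbd
  set D : ℝ := δ ^ (1 / p) with hDdef
  have hD : 0 < D := Real.rpow_pos_of_pos hδ _
  have hevα : ∀ᶠ k in Filter.atTop, a / 2 < α k :=
    hαa.eventually_const_lt (by linarith)
  have hevβ : ∀ᶠ k in Filter.atTop, β k < 2 * b :=
    hβb.eventually_lt_const (by linarith)
  have hv0 : Filter.Tendsto (fun k : ℕ => c * (k : ℝ) ^ (-s)) Filter.atTop (nhds 0) := by
    have h1 : Filter.Tendsto (fun k : ℕ => ((k : ℝ)) ^ (-s)) Filter.atTop (nhds 0) :=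
      (tendsto_rpow_neg_atTop hs.1).comp tendsto_natCast_atTop_atTop
    simpa using h1.const_mul c
  have hevv : ∀ᶠ k : ℕ in Filter.atTop, c * (k : ℝ) ^ (-s) < a * D / (8 * b) :=
    hv0.eventually_lt_const (by positivity)
  obtain ⟨M, hM⟩ := ((hev.and (hevα.and (hevβ.and hevv))).and
    (Filter.eventually_ge_atTop 1)).exists_forall_of_atTop
  set w : ℕ → ℝ := fun k => (k : ℝ) ^ (-s) with hwdef
  have hwpos : ∀ k : ℕ, 1 ≤ k → 0 < w k := fun k hk =>
    Real.rpow_pos_of_pos (by exact_mod_cast hk) _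
  have hwnn : ∀ k : ℕ, 0 ≤ w k := fun k => Real.rpow_nonneg (Nat.cast_nonneg k) _
  set C : ℝ := a * D * c / 4 with hCdef
  have hC : 0 < C := by positivity
  set g : ℕ → ℝ := fun k => ‖x k - xs‖ ^ 2 with hgdef
  have hgnn : ∀ k, 0 ≤ g k := fun k => sq_nonneg _
  -- key one-step inequality
  have key : ∀ k, M ≤ k → g (k + 1) ≤ g k - C * w k := by
    intro k hk
    obtain ⟨⟨hfk, hαk, hβk, hvk⟩, hk1⟩ := hM k hk
    have hv : 0 < c * (k : ℝ) ^ (-s) := by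
      have := hwpos k hk1; positivity
    have hH := H1 xs hxs k hk1 (by linarith)
    have hT : D ≤ (f (x k) - fstar - ε) ^ (1 / p) := by
      rw [hDdef]
      exact Real.rpow_le_rpow hδ.le (by linarith) (le_of_lt (one_div_pos.mpr hp.1))
    set v : ℝ := c * (k : ℝ) ^ (-s) with hvdef
    have h1 : a / 2 * (v * D) ≤ α k * v * (f (x k) - fstar - ε) ^ (1 / p) := by
      have hvT : v * D ≤ v * ((f (x k) - fstar - ε) ^ (1 / p)) :=
        mul_le_mul_of_nonneg_left hT hv.le
      have h := mul_le_mul hαk.le hvT (by positivity) (hαpos k).le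
      calc a / 2 * (v * D) ≤ α k * (v * (f (x k) - fstar - ε) ^ (1 / p)) := h
        _ = α k * v * (f (x k) - fstar - ε) ^ (1 / p) := (mul_assoc _ _ _).symm
    have h2a : 2 * b * v ≤ a * D / 4 := by
      have h := mul_le_mul_of_nonneg_left hvk.le (by linarith : (0:ℝ) ≤ 2 * b)
      have e : (2 * b) * (a * D / (8 * b)) = a * D / 4 := by
        field_simp; ring
      rw [e] at h; exact h
    have h2 : β k * v ^ 2 ≤ a * D / 4 * v := by
      have hb1 : β k * v ^ 2 ≤ 2 * b * v ^ 2 :=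
        mul_le_mul_of_nonneg_right hβk.le (sq_nonneg v)
      have hb2 : 2 * b * v ^ 2 = (2 * b * v) * v := by ring
      have hb3 := mul_le_mul_of_nonneg_right h2a hv.le
      linarith
    have heq : a / 2 * (v * D) = a * D / 4 * v + a * D / 4 * v := by ring
    have hCw : C * w k = a * D / 4 * v := by
      simp only [hCdef, hvdef, hwdef]; ring
    have hstep : g (k + 1) - g k ≤ -(a * D / 4 * v) := by
      simp only [hgdef]
      linarith [hH, h1, h2]
    rw [hCw]; linarith
  -- telescoping
  have tele : ∀ m : ℕ, g (M + m) + C * ∑ j ∈ Finset.range m, w (M + j) ≤ g M := by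
    intro m
    induction m with
    | zero => simp
    | succ m ih =>
      have hk := key (M + m) (Nat.le_add_right _ _)
      rw [Finset.sum_range_succ, mul_add, ← add_assoc]
      have heq : M + (m + 1) = M + m + 1 := by omega
      rw [heq]
      linarith
  -- divergence of the series
  have hnotsum : ¬ Summable w := by
    rw [hwdef, Real.summable_nat_rpow]
    intro h; linarith [hs.2]
  have hSdiv : Filter.Tendsto (fun m => ∑ i ∈ Finset.range m, w i) Filter.atTop Filter.atTop :=
    (not_summable_iff_tendsto_nat_atTop_of_nonneg hwnn).mp hnotsum
  have hTdiv : Filter.Tendsto (fun m => ∑ j ∈ Finset.range m, w (M + j)) Filter.atTop Filter.atTop := by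
    have h0 : Filter.Tendsto (fun m : ℕ => M + m) Filter.atTop Filter.atTop := by
      simpa [add_comm] using Filter.tendsto_add_atTop_nat M
    have h1 : Filter.Tendsto (fun m => ∑ i ∈ Finset.range (M + m), w i) Filter.atTop Filter.atTop :=
      hSdiv.comp h0
    have h2 : ∀ m, ∑ j ∈ Finset.range m, w (M + j)
        = ∑ i ∈ Finset.range (M + m), w i - ∑ i ∈ Finset.range M, w i := by
      intro m; rw [Finset.sum_range_add]; ring
    simp only [h2]
    exact Filter.tendsto_atTop_add_const_right _ _ h1
  have hCdiv : Filter.Tendsto (fun m => C * ∑ j ∈ Finset.range m, w (M + j))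
      Filter.atTop Filter.atTop := hTdiv.const_mul_atTop hC
  obtain ⟨m, hm⟩ := (hCdiv.eventually_ge_atTop (g M + 1)).exists
  have h3 := tele m
  have h4 := hgnn (M + m)
  linarith
end

section
/- Let ε ≥ 0, p ∈ (0,1], and {x_k} ⊆ X satisfy the inexact basic inequality with α_k → α > 0, β_k → β > 0, and dynamic stepsizes v_k = (α_k λ_k)/(2β_k)·[f(x_k) − f* − ε]_+^{1/p} with 0 < λ ≤ λ_k ≤ λ̄ < 2. Then either f(x_k) ≤ f* + ε for some k, or lim_k f(x_k) ≤ f* + ε. -/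
theorem stmt14 (n : ℕ) (X Xstar : Set (EuclideanSpace ℝ (Fin n)))
    (f : EuclideanSpace ℝ (Fin n) → ℝ) (fstar : ℝ)
    (hXsne : Xstar.Nonempty) (hXsX : Xstar ⊆ X)
    (hfs : ∀ z ∈ Xstar, f z = fstar) (hmin : ∀ y ∈ X, fstar ≤ f y)
    (ε p : ℝ) (hε : 0 ≤ ε) (hp : p ∈ Set.Ioc (0 : ℝ) 1)
    (x : ℕ → EuclideanSpace ℝ (Fin n)) (hxX : ∀ k, x k ∈ X)
    (α β : ℕ → ℝ) (a b : ℝ) (ha : 0 < a) (hb : 0 < b)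
    (hαpos : ∀ k, 0 < α k) (hβpos : ∀ k, 0 < β k)
    (hαa : Filter.Tendsto α Filter.atTop (nhds a))
    (hβb : Filter.Tendsto β Filter.atTop (nhds b))
    (lam : ℕ → ℝ) (llo lhi : ℝ) (hllo : 0 < llo) (hlhi : lhi < 2)
    (hlam : ∀ k, llo ≤ lam k ∧ lam k ≤ lhi)
    (H1 : ∀ xs ∈ Xstar, ∀ k : ℕ, 1 ≤ k → fstar + ε < f (x k) →
      ‖x (k + 1) - xs‖ ^ 2 - ‖x k - xs‖ ^ 2 ≤
        -(α k * (α k * lam k / (2 * β k) * max (f (x k) - fstar - ε) 0 ^ (1 / p)) *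
            (f (x k) - fstar - ε) ^ (1 / p)) +
          β k * (α k * lam k / (2 * β k) * max (f (x k) - fstar - ε) 0 ^ (1 / p)) ^ 2) :
    (∃ k : ℕ, 1 ≤ k ∧ f (x k) ≤ fstar + ε) ∨
      Filter.limsup (fun k => f (x k)) Filter.atTop ≤ fstar + ε := by
  by_cases hcase : ∃ k : ℕ, 1 ≤ k ∧ f (x k) ≤ fstar + ε
  · exact Or.inl hcase
  right
  push_neg at hcase
  obtain ⟨xs, hxs⟩ := hXsne
  have hp0 : 0 < p := hp.1
  set d : ℕ → ℝ := fun k => f (x k) - fstar - ε with hd_def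
  have hd : ∀ k, 1 ≤ k → 0 < d k := by
    intro k hk
    have := hcase k hk
    simp only [hd_def]
    linarith
  set r : ℕ → ℝ := fun k => d k ^ (1 / p) with hr_def
  have hrpos : ∀ k, 1 ≤ k → 0 < r k := fun k hk => Real.rpow_pos_of_pos (hd k hk) _
  set t : ℕ → ℝ := fun m => ‖x (m + 1) - xs‖ ^ 2 with ht_def
  -- per-step inequality
  have step : ∀ m : ℕ,
      t (m + 1) ≤ t m -
        (α (m + 1)) ^ 2 * lam (m + 1) * (2 - lam (m + 1)) / (4 * β (m + 1)) *
          (r (m + 1)) ^ 2 := by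
    intro m
    have hk1 : 1 ≤ m + 1 := by omega
    have hfgt : fstar + ε < f (x (m + 1)) := hcase (m + 1) hk1
    have h := H1 xs hxs (m + 1) hk1 hfgt
    have hmax : max (f (x (m + 1)) - fstar - ε) 0 = d (m + 1) :=
      max_eq_left (hd (m + 1) hk1).le
    rw [hmax] at h
    have hrw : (f (x (m + 1)) - fstar - ε) ^ (1 / p) = r (m + 1) := rfl
    rw [hrw] at h
    have hB : (0 : ℝ) < β (m + 1) := hβpos (m + 1)
    have halg :
        -(α (m + 1) * (α (m + 1) * lam (m + 1) / (2 * β (m + 1)) * r (m + 1)) * r (m + 1)) +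
            β (m + 1) * (α (m + 1) * lam (m + 1) / (2 * β (m + 1)) * r (m + 1)) ^ 2 =
          -((α (m + 1)) ^ 2 * lam (m + 1) * (2 - lam (m + 1)) / (4 * β (m + 1)) *
            (r (m + 1)) ^ 2) := by
      field_simp
      ring
    rw [halg] at h
    have : t (m + 1) - t m ≤
        -((α (m + 1)) ^ 2 * lam (m + 1) * (2 - lam (m + 1)) / (4 * β (m + 1)) *
          (r (m + 1)) ^ 2) := h
    linarith
  have hcknn : ∀ k : ℕ,
      0 ≤ (α k) ^ 2 * lam k * (2 - lam k) / (4 * β k) := by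
    intro k
    have h1 := (hlam k).1
    have h2 := (hlam k).2
    have hb1 : 0 ≤ lam k := le_trans hllo.le h1
    have hb2 : 0 ≤ 2 - lam k := by linarith
    have hβk := hβpos k
    exact div_nonneg (mul_nonneg (mul_nonneg (sq_nonneg _) hb1) hb2) (by linarith)
  have hanti : Antitone t := by
    apply antitone_nat_of_succ_le
    intro m
    have := step m
    nlinarith [hcknn (m + 1), sq_nonneg (r (m + 1))]
  have htnn : ∀ m, 0 ≤ t m := fun m => by positivity
  have ht : Filter.Tendsto t Filter.atTop (nhds (⨅ m, t m)) :=
    tendsto_atTop_ciInf hanti ⟨0, by rintro y ⟨m, rfl⟩; exact htnn m⟩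
  have ht' : Filter.Tendsto (fun m => t (m + 1)) Filter.atTop (nhds (⨅ m, t m)) :=
    (Filter.tendsto_add_atTop_iff_nat 1).mpr ht
  have hdiff : Filter.Tendsto (fun m => t m - t (m + 1)) Filter.atTop (nhds 0) := by
    have := ht.sub ht'
    simpa using this
  -- eventual lower bound constant
  set c : ℝ := (a / 2) ^ 2 * llo * (2 - lhi) / (4 * (2 * b)) with hc_def
  have h2l : (0 : ℝ) < 2 - lhi := by linarith
  have hcpos : 0 < c := by positivity
  have hA : ∀ᶠ k in Filter.atTop, a / 2 < α k :=
    hαa.eventually (eventually_gt_nhds (by linarith))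
  have hB : ∀ᶠ k in Filter.atTop, β k < 2 * b :=
    hβb.eventually (eventually_lt_nhds (by linarith))
  have hclow : ∀ᶠ k in Filter.atTop,
      c ≤ (α k) ^ 2 * lam k * (2 - lam k) / (4 * β k) := by
    filter_upwards [hA, hB] with k hAk hBk
    have h1 := (hlam k).1
    have h2 := (hlam k).2
    have hβk := hβpos k
    have hnum : (a / 2) ^ 2 * llo * (2 - lhi) ≤ (α k) ^ 2 * lam k * (2 - lam k) := by
      have hα2 : (a / 2) ^ 2 ≤ (α k) ^ 2 := by nlinarith
      have hlam2 : llo * (2 - lhi) ≤ lam k * (2 - lam k) := by nlinarith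
      have key := mul_le_mul hα2 hlam2 (mul_nonneg hllo.le h2l.le) (sq_nonneg (α k))
      nlinarith [key]
    have hden : 0 < 4 * β k := by linarith
    exact div_le_div₀ (le_trans (by positivity) hnum) hnum hden (by linarith)
  obtain ⟨N, hN⟩ := Filter.eventually_atTop.mp hclow
  have hbnd : ∀ᶠ m in Filter.atTop, c * (r (m + 1)) ^ 2 ≤ t m - t (m + 1) := by
    refine Filter.eventually_atTop.mpr ⟨N, fun m hm => ?_⟩
    have h1 := hN (m + 1) (by omega)
    have h2 := step m
    have h3 : c * (r (m + 1)) ^ 2 ≤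
        (α (m + 1)) ^ 2 * lam (m + 1) * (2 - lam (m + 1)) / (4 * β (m + 1)) *
          (r (m + 1)) ^ 2 :=
      mul_le_mul_of_nonneg_right h1 (sq_nonneg _)
    linarith
  have hsq : Filter.Tendsto (fun m => c * (r (m + 1)) ^ 2) Filter.atTop (nhds 0) :=
    squeeze_zero' (Filter.Eventually.of_forall fun m => by positivity) hbnd hdiff
  have hr2 : Filter.Tendsto (fun m => (r (m + 1)) ^ 2) Filter.atTop (nhds 0) := by
    have heq : (fun m => (r (m + 1)) ^ 2) = fun m => c * (r (m + 1)) ^ 2 / c := by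
      funext m; field_simp
    rw [heq]
    simpa using hsq.div_const c
  have hr1 : Filter.Tendsto (fun m => r (m + 1)) Filter.atTop (nhds 0) := by
    have hs := (Real.continuous_sqrt.tendsto 0).comp hr2
    simp only [Real.sqrt_zero] at hs
    exact hs.congr fun m => Real.sqrt_sq (hrpos (m + 1) (by omega)).le
  have hdeq : ∀ m : ℕ, d (m + 1) = r (m + 1) ^ p := by
    intro m
    have h1 : (0 : ℝ) ≤ d (m + 1) := (hd (m + 1) (by omega)).le
    rw [hr_def]
    dsimp only
    rw [← Real.rpow_mul h1, one_div_mul_cancel hp0.ne', Real.rpow_one]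
  have hcont : ContinuousAt (fun y : ℝ => y ^ p) 0 :=
    Real.continuousAt_rpow_const 0 p (Or.inr hp0.le)
  have hdlim : Filter.Tendsto (fun m => d (m + 1)) Filter.atTop (nhds 0) := by
    have h := hcont.tendsto.comp hr1
    rw [Real.zero_rpow hp0.ne'] at h
    exact h.congr fun m => (hdeq m).symm
  have hflim : Filter.Tendsto (fun k => f (x k)) Filter.atTop (nhds (fstar + ε)) := by
    rw [← Filter.tendsto_add_atTop_iff_nat 1]
    have heq : (fun m => f (x (m + 1))) = fun m => d (m + 1) + (fstar + ε) := by
      funext m; simp only [hd_def]; ring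
    rw [heq]
    simpa using hdlim.add_const (fstar + ε)
  exact hflim.limsup_eq.le
end
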